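/- Let H be a Hopf algebra with bijective antipode, M an algebra and a left H-comodule, π: H → M a surjective algebra homomorphism such that the action h·m := π(h)m makes M a left-left anti-Yetter-Drinfeld module, and assume π(1⁽⁻¹⁾)1⁽⁰⁾ = 1 (where 1⁽⁻¹⁾⊗1⁽⁰⁾ is the coaction applied to the unit of M). Then M is stable: m⁽⁻¹⁾·m⁽⁰⁾ = m for all m ∈ M. -/

import Mathlib

open TensorProduct LinearMap Coalgebra

noncomputable section

variable (k : Type) [Field k] (H : Type) [Ring H] [HopfAlgebra k H]
variable (M : Type) [Ring M] [Algebra k M]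

/-- The right-hand side `h⁽¹⁾m⁽⁻¹⁾S⁻¹(h⁽³⁾) ⊗ h⁽²⁾m⁽⁰⁾` of the left-left
anti-Yetter-Drinfeld condition, as a linear map `H ⊗ M → H ⊗ M`, where `Sinv` plays
the role of the inverse of the antipode. -/
def aydRHSll (Sinv : H →ₗ[k] H) (act : H ⊗[k] M →ₗ[k] M)
    (coact : M →ₗ[k] H ⊗[k] M) : H ⊗[k] M →ₗ[k] H ⊗[k] M :=
  map (mul' k H ∘ₗ map (mul' k H) Sinv) act
    ∘ₗ (TensorProduct.assoc k (H ⊗[k] H) H (H ⊗[k] M)).symm.toLinearMap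
    ∘ₗ map LinearMap.id
        ((TensorProduct.leftComm k H H M).toLinearMap
          ∘ₗ (TensorProduct.assoc k H H M).toLinearMap)
    ∘ₗ (tensorTensorTensorComm k H (H ⊗[k] H) H M).toLinearMap
    ∘ₗ map (map LinearMap.id comul ∘ₗ comul) coact

/-- The left-left anti-Yetter-Drinfeld condition:
`Δ_M(h·m) = h⁽¹⁾m⁽⁻¹⁾S⁻¹(h⁽³⁾) ⊗ h⁽²⁾m⁽⁰⁾`. -/
def IsAYDll (Sinv : H →ₗ[k] H) (act : H ⊗[k] M →ₗ[k] M)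
    (coact : M →ₗ[k] H ⊗[k] M) : Prop :=
  coact ∘ₗ act = aydRHSll k H M Sinv act coact


/-! Write `m = π(h)·1`. The anti-Yetter-Drinfeld condition gives
`Δ_M(m) = h⁽¹⁾1⁽⁻¹⁾S⁻¹(h⁽³⁾) ⊗ h⁽²⁾1⁽⁰⁾`, so acting back,
`m⁽⁻¹⁾·m⁽⁰⁾ = π(h⁽¹⁾) π(1⁽⁻¹⁾) π(S⁻¹(h⁽³⁾)h⁽²⁾) 1⁽⁰⁾`. Since the antipode is an
anti-homomorphism, `S⁻¹(h⁽²⁾)h⁽¹⁾ = ε(h)`, and the expression collapses to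
`π(h) π(1⁽⁻¹⁾)1⁽⁰⁾ = π(h) = m`. -/

theorem Coalgebra.sum_counit_right_smul_left {R A : Type*} [CommSemiring R] [AddCommMonoid A]
    [Module R A] [Coalgebra R A] {a : A} {ι : Type*} (repr : Repr R a ι) :
    ∑ i ∈ repr.index, counit (R := R) (repr.right i) • repr.left i = a := by
  simpa only [map_sum, rid_tmul, one_smul] using
    congr(_root_.TensorProduct.rid R A $(sum_tmul_counit_eq repr))

theorem HopfAlgebra.sum_inv_antipode_mul_eq_algebraMap_counit {R A : Type*} [CommSemiring R]
    [Semiring A] [HopfAlgebra R A] {Sinv : A →ₗ[R] A}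
    (hSinv1 : Sinv ∘ₗ antipode R = .id) (hSinv2 : antipode R ∘ₗ Sinv = .id)
    {a : A} {ι : Type*} (repr : Repr R a ι) :
    ∑ i ∈ repr.index, Sinv (repr.right i) * repr.left i = algebraMap R A (counit a) := by
  have hS : ∀ x, antipode R (Sinv x) = x := LinearMap.congr_fun hSinv2
  have hinj : Function.Injective (antipode R : A →ₗ[R] A) :=
    Function.LeftInverse.injective (LinearMap.congr_fun hSinv1)
  refine hinj ?_
  simp [antipode_mul_antidistrib, hS, Algebra.algebraMap_eq_smul_one, sum_antipode_mul_eq_smul]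

variable {k H M} in
theorem mul'_map_aydRHSll_tmul {Sinv : H →ₗ[k] H}
    (hSinv1 : Sinv ∘ₗ HopfAlgebra.antipode k = .id) (hSinv2 : HopfAlgebra.antipode k ∘ₗ Sinv = .id)
    (π : H →ₐ[k] M) (coact : M →ₗ[k] H ⊗[k] M) (h : H) (m : M) :
    (mul' k M ∘ₗ map π.toLinearMap LinearMap.id)
        (aydRHSll k H M Sinv (mul' k M ∘ₗ map π.toLinearMap LinearMap.id) coact (h ⊗ₜ m)) =
      π h * (mul' k M ∘ₗ map π.toLinearMap LinearMap.id) (coact m) := by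
  simp only [aydRHSll, comp_apply, map_tmul]
  induction coact m using TensorProduct.induction_on with
  | zero => simp
  | add n n' hn hn' => simp only [tmul_add, map_add, hn, hn', mul_add]
  | tmul a m =>
    set r := ℛ k h
    rw [← r.eq]
    simp only [← (ℛ k _).eq, sum_tmul, tmul_sum, map_sum, LinearEquiv.coe_coe, comp_apply,
      tensorTensorTensorComm_tmul, map_tmul, TensorProduct.assoc_tmul, leftComm_tmul,
      assoc_symm_tmul, mul'_apply, AlgHom.toLinearMap_apply, id_coe, id_eq, map_mul]
    calc _ = ∑ x ∈ r.index, π (r.left x) * π a * π (∑ j ∈ (ℛ k (r.right x)).index,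
          Sinv ((ℛ k (r.right x)).right j) * (ℛ k (r.right x)).left j) * m := by
          simp [Finset.mul_sum, Finset.sum_mul, mul_assoc]
      _ = ∑ x ∈ r.index, π (counit (R := k) (r.right x) • r.left x) * (π a * m) := by
          simp [HopfAlgebra.sum_inv_antipode_mul_eq_algebraMap_counit hSinv1 hSinv2,
            Algebra.smul_def, Algebra.commutes, mul_assoc]
      _ = π h * (π a * m) := by
          rw [← Finset.sum_mul, ← map_sum, sum_counit_right_smul_left]

theorem statement10
    (Sinv : H →ₗ[k] H)
    (hSinv1 : Sinv ∘ₗ HopfAlgebra.antipode (R := k) = LinearMap.id)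
    (hSinv2 : HopfAlgebra.antipode (R := k) ∘ₗ Sinv = LinearMap.id)
    -- `M` is a left `H`-comodule
    (coact : M →ₗ[k] H ⊗[k] M)
    -- `π : H → M` is a surjective algebra homomorphism
    (π : H →ₐ[k] M) (hπ : Function.Surjective π)
    -- the action `h·m = π(h)m` makes `M` an anti-Yetter-Drinfeld module
    (hayd : IsAYDll k H M Sinv
      (mul' k M ∘ₗ map π.toLinearMap LinearMap.id) coact)
    -- `π(1⁽⁻¹⁾)1⁽⁰⁾ = 1`
    (hone : (mul' k M ∘ₗ map π.toLinearMap LinearMap.id) (coact (1 : M)) = (1 : M)) :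
    -- then `M` is stable
    (mul' k M ∘ₗ map π.toLinearMap LinearMap.id) ∘ₗ coact = LinearMap.id := by
  set act := mul' k M ∘ₗ map π.toLinearMap LinearMap.id
  ext m
  obtain ⟨h, rfl⟩ := hπ m
  calc act (coact (π h)) = act (coact (act (h ⊗ₜ 1))) := by simp [act]
    _ = act (aydRHSll k H M Sinv act coact (h ⊗ₜ 1)) :=
      congrArg act (LinearMap.congr_fun hayd _)
    _ = π h := by rw [mul'_map_aydRHSll_tmul hSinv1 hSinv2, hone, mul_one]
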